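/- Let X be an ℕ² shift over the alphabet {0,1} with positive entropy h(X) > 0. Then there exists ε > 0 such that for every k₁, k₂ ≥ 1 there is a set J ⊆ [1,k₁]×[1,k₂] with exactly ⌊ε·k₁·k₂⌋ elements which is an independence set for X. -/
import Mathlib


open Filter

/-- `X` is an `ℕ²` shift over the binary alphabet. -/
def IsN2Shift (X : Set (ℕ × ℕ → Bool)) : Prop :=
  IsClosed X ∧ (∀ x ∈ X, (fun p : ℕ × ℕ => x (p.1 + 1, p.2)) ∈ X) ∧
    (∀ x ∈ X, (fun p : ℕ × ℕ => x (p.1, p.2 + 1)) ∈ X)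

/-- The number of blocks of `X` on the box `[0,k₁) × [0,k₂)`. -/
noncomputable def blockCount2 (X : Set (ℕ × ℕ → Bool)) (k₁ k₂ : ℕ) : ℕ :=
  Set.ncard ((fun x (q : Fin k₁ × Fin k₂) => x ((q.1 : ℕ), (q.2 : ℕ))) '' X)

/-- The (topological) entropy of an `ℕ²` shift
(written with `limsup`, which agrees with the limit whenever the latter exists). -/
noncomputable def entropy2 (X : Set (ℕ × ℕ → Bool)) : ℝ :=
  limsup (fun n : ℕ × ℕ => Real.log (blockCount2 X n.1 n.2) / (n.1 * n.2)) atTop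

/-- `S` is an independence set for `X`. -/
def IsIndepSet {I A : Type*} (X : Set (I → A)) (S : Set I) : Prop :=
  ∀ u : I → A, ∃ x ∈ X, ∀ i ∈ S, x i = u i

lemma shift_mem {X : Set (ℕ × ℕ → Bool)} (hX : IsN2Shift X) {x} (hx : x ∈ X) (a b : ℕ) :
    (fun p : ℕ × ℕ => x (p.1 + a, p.2 + b)) ∈ X := by
  induction a with
  | zero =>
      induction b with
      | zero => simpa using hx
      | succ b ih =>
          have := hX.2.2 _ ih
          simpa [Nat.add_assoc, Nat.add_comm 1 b] using this
  | succ a ih =>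
      have := hX.2.1 _ ih
      simp only at this
      convert this using 2 with p
      simp [Nat.add_assoc, Nat.add_comm 1 a]

lemma blockCount_le {X : Set (ℕ × ℕ → Bool)} (hX : IsN2Shift X) {n m : ℕ}
    (hn : 1 ≤ n) (hm : 1 ≤ m) (N M : ℕ) :
    blockCount2 X N M ≤ blockCount2 X n m ^ ((N / n + 1) * (M / m + 1)) := by
  classical
  set a := N / n + 1 with ha
  set b := M / m + 1 with hb
  set B : Set (Fin n × Fin m → Bool) :=
    ((fun x (q : Fin n × Fin m) => x ((q.1 : ℕ), (q.2 : ℕ))) '' X) with hB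
  set A : Set (Fin N × Fin M → Bool) :=
    ((fun x (q : Fin N × Fin M) => x ((q.1 : ℕ), (q.2 : ℕ))) '' X) with hA
  have key : ∀ y : A, ∃ x, x ∈ X ∧ (fun q : Fin N × Fin M => x ((q.1:ℕ),(q.2:ℕ))) = (y : Fin N × Fin M → Bool) := fun y => y.2
  choose x hxX hxy using key
  let φ : A → (Fin a × Fin b → B) := fun y ij =>
    ⟨fun q => x y ((q.1 : ℕ) + n * (ij.1 : ℕ), (q.2 : ℕ) + m * (ij.2 : ℕ)),
      ⟨_, shift_mem hX (hxX y) (n * (ij.1 : ℕ)) (m * (ij.2 : ℕ)), rfl⟩⟩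
  have hφ : Function.Injective φ := by
    intro y z h
    apply Subtype.ext; funext q
    have hq1 : (q.1 : ℕ) / n < a := Nat.lt_succ_of_le (Nat.div_le_div_right q.1.2.le)
    have hq2 : (q.2 : ℕ) / m < b := Nat.lt_succ_of_le (Nat.div_le_div_right q.2.2.le)
    have e1 : (q.1:ℕ) % n + n * ((q.1:ℕ)/n) = (q.1:ℕ) := Nat.mod_add_div _ _
    have e2 : (q.2:ℕ) % m + m * ((q.2:ℕ)/m) = (q.2:ℕ) := Nat.mod_add_div _ _
    have hr1 : (q.1:ℕ) % n < n := Nat.mod_lt _ hn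
    have hr2 : (q.2:ℕ) % m < m := Nat.mod_lt _ hm
    have h2 := congrFun (congrArg Subtype.val
      (congrFun h (⟨(q.1:ℕ)/n, hq1⟩, ⟨(q.2:ℕ)/m, hq2⟩)))
      (⟨(q.1:ℕ) % n, hr1⟩, ⟨(q.2:ℕ) % m, hr2⟩)
    simp only [φ] at h2
    rw [e1, e2] at h2
    have ey := congrFun (hxy y) q
    have ez := congrFun (hxy z) q
    rw [← ey, ← ez]
    exact h2
  have hcard : Nat.card A ≤ Nat.card B ^ (a * b) := by
    calc Nat.card A ≤ Nat.card (Fin a × Fin b → B) := Nat.card_le_card_of_injective φ hφ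
    _ = Nat.card B ^ (a * b) := by
        rw [Nat.card_fun]
        simp [Nat.card_eq_fintype_card]
  have h1 : blockCount2 X N M = Nat.card A := (Nat.card_coe_set_eq _).symm
  have h2 : blockCount2 X n m = Nat.card B := (Nat.card_coe_set_eq _).symm
  rw [h1, h2]; exact hcard

lemma log_nat_nonneg (k : ℕ) : 0 ≤ Real.log k := by
  rcases Nat.eq_zero_or_pos k with h | h
  · simp [h]
  · exact Real.log_nonneg (by exact_mod_cast h)

lemma blockCount_lower {X : Set (ℕ × ℕ → Bool)} (hX : IsN2Shift X)
    (hpos : 0 < entropy2 X) {n m : ℕ} (hn : 1 ≤ n) (hm : 1 ≤ m) :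
    Real.exp (entropy2 X / 8 * (n * m)) ≤ blockCount2 X n m := by
  set f : ℕ × ℕ → ℝ := fun p => Real.log (blockCount2 X p.1 p.2) / (p.1 * p.2) with hfdef
  have hf0 : ∀ p, 0 ≤ f p := fun p =>
    div_nonneg (log_nat_nonneg _) (by positivity)
  have cob : IsCoboundedUnder (· ≤ ·) atTop f :=
    isCoboundedUnder_le_of_le _ hf0
  have hlim : entropy2 X = limsup f atTop := rfl
  have hfreq : ∃ᶠ p in atTop, entropy2 X / 2 < f p := by
    refine frequently_lt_of_lt_limsup cob ?_
    rw [← hlim]; linarith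
  obtain ⟨p, hlt, hge⟩ := (hfreq.and_eventually (eventually_ge_atTop (n, m))).exists
  obtain ⟨N, M⟩ := p
  have hN : n ≤ N := hge.1
  have hM : m ≤ M := hge.2
  set c := blockCount2 X n m with hc
  set C := blockCount2 X N M with hC
  set k := (N / n + 1) * (M / m + 1) with hk
  have hCle : C ≤ c ^ k := blockCount_le hX hn hm N M
  have hNM : (0:ℝ) < (N:ℝ) * M := by
    have : 1 ≤ N := hn.trans hN
    have : 1 ≤ M := hm.trans hM
    positivity
  have hCpos : 0 < C := by
    rcases Nat.eq_zero_or_pos C with h | h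
    · exfalso
      have hlt' : entropy2 X / 2 < Real.log (C:ℝ) / ((N:ℝ) * M) := by
        simpa [f, hC] using hlt
      rw [h] at hlt'
      rw [Nat.cast_zero, Real.log_zero, zero_div] at hlt'
      linarith
    · exact h
  have hcpos : 0 < c := by
    rcases Nat.eq_zero_or_pos c with h | h
    · rw [h, zero_pow (by positivity)] at hCle; omega
    · exact h
  have hlogC : entropy2 X / 2 * ((N:ℝ) * M) < Real.log C := by
    have h' : entropy2 X / 2 < Real.log (C:ℝ) / ((N:ℝ) * M) := by
      simpa [f, hC] using hlt
    have := (lt_div_iff₀ hNM).1 h'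
    linarith
  have hlogCk : Real.log C ≤ (k:ℝ) * Real.log c := by
    calc Real.log C ≤ Real.log ((c:ℝ) ^ k) := by
          apply Real.log_le_log (by exact_mod_cast hCpos)
          exact_mod_cast hCle
    _ = (k:ℝ) * Real.log c := Real.log_pow _ _
  have hkb : (k:ℝ) * (n * m) ≤ 4 * ((N:ℝ) * M) := by
    have h1 : n * (N / n + 1) ≤ 2 * N := by
      have h3 : N / n * n ≤ N := Nat.div_mul_le_self N n
      calc n * (N / n + 1) = N / n * n + n := by ring
      _ ≤ N + N := Nat.add_le_add h3 hN
      _ = 2 * N := by ring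
    have h2 : m * (M / m + 1) ≤ 2 * M := by
      have h3 : M / m * m ≤ M := Nat.div_mul_le_self M m
      calc m * (M / m + 1) = M / m * m + m := by ring
      _ ≤ M + M := Nat.add_le_add h3 hM
      _ = 2 * M := by ring
    have : (n * (N / n + 1)) * (m * (M / m + 1)) ≤ (2 * N) * (2 * M) :=
      Nat.mul_le_mul h1 h2
    calc (k:ℝ) * (n * m) = ((n * (N / n + 1)) * (m * (M / m + 1)) : ℕ) := by
          push_cast [hk]; ring
    _ ≤ ((2 * N) * (2 * M) : ℕ) := by exact_mod_cast this
    _ = 4 * ((N:ℝ) * M) := by push_cast; ring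
  have hlogc : entropy2 X / 8 * ((n:ℝ) * m) ≤ Real.log c := by
    have hlc : 0 ≤ Real.log c := log_nat_nonneg _
    have hnm : (0:ℝ) < (n:ℝ) * m := by positivity
    nlinarith [mul_le_mul_of_nonneg_left hkb hlc, hlogC, hlogCk, hNM, hnm]
  calc Real.exp (entropy2 X / 8 * (n * m)) ≤ Real.exp (Real.log c) :=
        Real.exp_le_exp.2 hlogc
  _ = c := Real.exp_log (by exact_mod_cast hcpos)

lemma exists_shattered {α : Type*} [Fintype α] [DecidableEq α] (𝒜 : Finset (Finset α)) (t : ℕ)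
    (h : ∑ i ∈ Finset.range t, (Fintype.card α).choose i < 𝒜.card) :
    ∃ s : Finset α, s.card = t ∧ 𝒜.Shatters s := by
  by_cases hs : ∃ s : Finset α, t ≤ s.card ∧ 𝒜.Shatters s
  · obtain ⟨s, hts, hsh⟩ := hs
    obtain ⟨s', hsub, hcard⟩ := Finset.exists_subset_card_eq hts
    exact ⟨s', hcard, hsh.mono_right hsub⟩
  · exfalso
    push_neg at hs
    have hsub : 𝒜.shatterer ⊆
        (Finset.range t).biUnion (fun i => Finset.univ.powersetCard i) := by
      intro s hsmem
      rw [Finset.mem_shatterer] at hsmem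
      have hlt : s.card < t := lt_of_not_ge (fun hle => hs s hle hsmem)
      exact Finset.mem_biUnion.2 ⟨s.card, Finset.mem_range.2 hlt,
        Finset.mem_powersetCard_univ.2 rfl⟩
    have : 𝒜.card ≤ ∑ i ∈ Finset.range t, (Fintype.card α).choose i := by
      calc 𝒜.card ≤ 𝒜.shatterer.card := Finset.card_le_card_shatterer 𝒜
      _ ≤ ((Finset.range t).biUnion (fun i => Finset.univ.powersetCard i)).card :=
          Finset.card_le_card hsub
      _ ≤ ∑ i ∈ Finset.range t, (Finset.univ.powersetCard i).card :=
          Finset.card_biUnion_le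
      _ = ∑ i ∈ Finset.range t, (Fintype.card α).choose i := by
          apply Finset.sum_congr rfl
          intro i _
          rw [Finset.card_powersetCard, Finset.card_univ]
    omega

lemma sum_choose_le (n t : ℕ) {l : ℝ} (hl0 : 0 < l) (hl1 : l ≤ 1) :
    (∑ i ∈ Finset.range t, ((n.choose i : ℝ))) ≤ (1 + l) ^ n / l ^ t := by
  rw [le_div_iff₀ (pow_pos hl0 t)]
  calc (∑ i ∈ Finset.range t, ((n.choose i:ℝ))) * l ^ t
      = ∑ i ∈ Finset.range t, (n.choose i:ℝ) * l ^ t := by rw [Finset.sum_mul]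
    _ ≤ ∑ i ∈ Finset.range t, (n.choose i:ℝ) * l ^ i := by
        apply Finset.sum_le_sum
        intro i hi
        have := pow_le_pow_of_le_one hl0.le hl1 (Finset.mem_range.1 hi).le
        exact mul_le_mul_of_nonneg_left this (by positivity)
    _ ≤ ∑ i ∈ Finset.range (max t (n+1)), (n.choose i:ℝ) * l ^ i :=
        Finset.sum_le_sum_of_subset_of_nonneg
          (Finset.range_subset_range.2 (le_max_left _ _)) (fun i _ _ => by positivity)
    _ = ∑ i ∈ Finset.range (n+1), (n.choose i:ℝ) * l ^ i := by
        symm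
        apply Finset.sum_subset (Finset.range_subset_range.2 (le_max_right _ _))
        intro i _ hni
        have hni' : n < i := by
          rcases lt_or_ge n i with h' | h'
          · exact h'
          · exact absurd (Finset.mem_range.2 (Nat.lt_succ_of_le h')) hni
        simp [Nat.choose_eq_zero_of_lt hni']
    _ = (1 + l) ^ n := by
        rw [add_comm 1 l, add_pow]
        apply Finset.sum_congr rfl
        intro i _
        simp [mul_comm]

/-- If a binary `ℕ²` shift has positive entropy, then there is `ε > 0`
such that for all `k₁, k₂ ≥ 1` there is an independence set `J ⊆ [0,k₁)×[0,k₂)` for `X`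
with exactly `⌊ε·k₁·k₂⌋` elements. -/
theorem exists_indep_in_every_box_of_pos_entropy
    (X : Set (ℕ × ℕ → Bool)) (hX : IsN2Shift X) (hpos : 0 < entropy2 X) :
    ∃ ε : ℝ, 0 < ε ∧ ∀ k₁ k₂ : ℕ, 1 ≤ k₁ → 1 ≤ k₂ →
      ∃ J : Finset (ℕ × ℕ), J ⊆ Finset.range k₁ ×ˢ Finset.range k₂ ∧
        J.card = ⌊ε * (k₁ * k₂ : ℝ)⌋₊ ∧ IsIndepSet X (J : Set (ℕ × ℕ)) := by
  classical
  set h₁ := entropy2 X / 8 with hh₁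
  have h₁pos : 0 < h₁ := by positivity
  set l := min (h₁ / 2) 1 with hl
  have hl0 : 0 < l := lt_min (by positivity) one_pos
  have hl1 : l ≤ 1 := min_le_right _ _
  have hlh : l ≤ h₁ / 2 := min_le_left _ _
  have hlog : Real.log l ≤ 0 := Real.log_nonpos hl0.le hl1
  set C := 1 - Real.log l with hCdef
  have hC1 : 1 ≤ C := by rw [hCdef]; linarith
  set ε := h₁ / (4 * C) with hε
  have hεpos : 0 < ε := div_pos h₁pos (by linarith)
  have hεC : ε * C = h₁ / 4 := by
    rw [hε]
    field_simp
  refine ⟨ε, hεpos, ?_⟩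
  intro k₁ k₂ hk₁ hk₂
  set n := k₁ * k₂ with hn
  set t := ⌊ε * ((k₁ : ℝ) * k₂)⌋₊ with ht
  have hn1 : 1 ≤ n := Nat.one_le_iff_ne_zero.2 (by positivity)
  have hncast : ((n : ℕ) : ℝ) = (k₁ : ℝ) * k₂ := by rw [hn]; push_cast; ring
  have htle : (t : ℝ) ≤ ε * n := by
    rw [ht, hncast]
    exact Nat.floor_le (by positivity)
  set B : Set ((Fin k₁ × Fin k₂) → Bool) :=
    ((fun x (q : Fin k₁ × Fin k₂) => x ((q.1 : ℕ), (q.2 : ℕ))) '' X) with hB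
  have hBfin : B.Finite := Set.toFinite B
  set F : Finset ((Fin k₁ × Fin k₂) → Bool) := hBfin.toFinset with hF
  set 𝒜 : Finset (Finset (Fin k₁ × Fin k₂)) :=
    F.image (fun f => Finset.univ.filter (fun q => f q = true)) with h𝒜
  have hinj : Function.Injective
      (fun f : (Fin k₁ × Fin k₂) → Bool => Finset.univ.filter (fun q => f q = true)) := by
    intro f g hfg
    funext q
    have := Finset.ext_iff.1 hfg q
    simp only [Finset.mem_filter, Finset.mem_univ, true_and] at this
    rw [Bool.eq_iff_iff]
    exact this
  have hcard𝒜 : 𝒜.card = blockCount2 X k₁ k₂ := by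
    rw [h𝒜, Finset.card_image_of_injective _ hinj, hF]
    have h' : blockCount2 X k₁ k₂ = B.ncard := rfl
    rw [h', Set.ncard_eq_toFinset_card B hBfin]
  have hcardα : Fintype.card (Fin k₁ × Fin k₂) = n := by simp [hn]
  have hbc : Real.exp (h₁ * ((k₁ : ℝ) * k₂)) ≤ (blockCount2 X k₁ k₂ : ℝ) :=
    blockCount_lower hX hpos hk₁ hk₂
  have hkey : ∑ i ∈ Finset.range t, ((Fintype.card (Fin k₁ × Fin k₂)).choose i) < 𝒜.card := by
    rw [hcard𝒜, hcardα]
    have hreal : ((∑ i ∈ Finset.range t, n.choose i : ℕ) : ℝ) < (blockCount2 X k₁ k₂ : ℝ) := by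
      have hsum : ((∑ i ∈ Finset.range t, n.choose i : ℕ) : ℝ) ≤ (1 + l) ^ n / l ^ t := by
        push_cast
        exact sum_choose_le n t hl0 hl1
      have hmid : (1 + l) ^ n / l ^ t < Real.exp (h₁ * ((k₁ : ℝ) * k₂)) := by
        have he : (1 + l) ^ n / l ^ t
            = Real.exp ((n : ℝ) * Real.log (1 + l) - (t : ℝ) * Real.log l) := by
          rw [Real.exp_sub, ← Real.log_pow, ← Real.log_pow,
            Real.exp_log (pow_pos (by linarith) n), Real.exp_log (pow_pos hl0 t)]
        rw [he]
        apply Real.exp_lt_exp.2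
        rw [← hncast]
        have hlog1p : Real.log (1 + l) ≤ l := by
          have := Real.log_le_sub_one_of_pos (show (0:ℝ) < 1 + l by linarith)
          linarith
        have hnR : (1 : ℝ) ≤ (n : ℝ) := by exact_mod_cast hn1
        have htR : (0 : ℝ) ≤ (t : ℝ) := Nat.cast_nonneg t
        have h1 : (n : ℝ) * Real.log (1 + l) ≤ (n : ℝ) * (h₁ / 2) := by
          apply mul_le_mul_of_nonneg_left (by linarith) (by linarith)
        have h2 : -((t : ℝ) * Real.log l) ≤ (t : ℝ) * C := by
          have : -Real.log l ≤ C := by rw [hCdef]; linarith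
          nlinarith
        have h3 : (t : ℝ) * C ≤ ε * (n : ℝ) * C := by
          apply mul_le_mul_of_nonneg_right htle (by linarith)
        have h4 : ε * (n : ℝ) * C = h₁ / 4 * (n : ℝ) := by
          rw [mul_right_comm, hεC]
        nlinarith
      linarith
    exact_mod_cast hreal
  obtain ⟨s, hscard, hsh⟩ := exists_shattered 𝒜 t hkey
  have hmapinj : Function.Injective
      (fun q : Fin k₁ × Fin k₂ => ((q.1 : ℕ), (q.2 : ℕ))) := by
    intro q r h
    rw [Prod.ext_iff] at h ⊢
    exact ⟨Fin.val_injective h.1, Fin.val_injective h.2⟩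
  refine ⟨s.image (fun q => ((q.1 : ℕ), (q.2 : ℕ))), ?_, ?_, ?_⟩
  · intro p hp
    simp only [Finset.mem_image] at hp
    obtain ⟨q, _, rfl⟩ := hp
    simp only [Finset.mem_product, Finset.mem_range]
    exact ⟨q.1.2, q.2.2⟩
  · rw [Finset.card_image_of_injective _ hmapinj, hscard]
  · intro u
    obtain ⟨a, ha𝒜, hsa⟩ := hsh (Finset.filter_subset
      (fun q : Fin k₁ × Fin k₂ => u ((q.1 : ℕ), (q.2 : ℕ)) = true) s)
    rw [h𝒜, Finset.mem_image] at ha𝒜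
    obtain ⟨f, hfF, rfl⟩ := ha𝒜
    rw [hF, Set.Finite.mem_toFinset] at hfF
    obtain ⟨x, hxX, hfx⟩ := hfF
    refine ⟨x, hxX, ?_⟩
    intro i hi
    simp only [Finset.coe_image, Set.mem_image, Finset.mem_coe] at hi
    obtain ⟨q, hqs, rfl⟩ := hi
    have hxq : x ((q.1 : ℕ), (q.2 : ℕ)) = f q := congrFun hfx q
    rw [hxq, Bool.eq_iff_iff]
    have h1 : q ∈ s ∩ (Finset.univ.filter fun r => f r = true) ↔
        q ∈ s.filter (fun q : Fin k₁ × Fin k₂ => u ((q.1 : ℕ), (q.2 : ℕ)) = true) := by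
      rw [hsa]
    simp only [Finset.mem_inter, Finset.mem_filter, Finset.mem_univ, true_and, hqs,
      true_and] at h1
    exact h1
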